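/- The bivariate Shepard–Bernoulli operator interpolates at every node: for each k ∈ {1,…,N}, lim_{x→V_k, x∉{V_1,…,V_N}} S_{B_m}[f](x) = f(V_k), provided f is m times continuously differentiable on a neighborhood of D. -/

import Mathlib

open Filter Finset
open scoped BigOperators Topology

noncomputable section

abbrev E2 : Type := EuclideanSpace ℝ (Fin 2)

def e0 : E2 := EuclideanSpace.single 0 1
def e1 : E2 := EuclideanSpace.single 1 1

/-- Directional derivative of `f` along `v`. -/
def Dv (v : E2) (f : E2 → ℝ) : E2 → ℝ := fun x => fderiv ℝ f x v

/-- Iterated mixed directional derivative `D_u^a D_v^b f`. -/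
def DD (u v : E2) (a b : ℕ) (f : E2 → ℝ) : E2 → ℝ := (Dv u)^[a] ((Dv v)^[b] f)

/-- Partial derivative `∂^{a+b} f / ∂x^a ∂y^b`. -/
def pd (a b : ℕ) (f : E2 → ℝ) : E2 → ℝ := DD e0 e1 a b f

/-- Twice the signed area determinant. -/
def detA (P Q R : E2) : ℝ := (Q 0 - P 0) * (R 1 - P 1) - (R 0 - P 0) * (Q 1 - P 1)

def lam1 (V1 V2 V3 x : E2) : ℝ := detA x V2 V3 / detA V1 V2 V3
def lam2 (V1 V2 V3 x : E2) : ℝ := detA V1 x V3 / detA V1 V2 V3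
def lam3 (V1 V2 V3 x : E2) : ℝ := detA V1 V2 x / detA V1 V2 V3

def rmax (V1 V2 V3 : E2) : ℝ := max (max ‖V1 - V2‖ ‖V1 - V3‖) ‖V2 - V3‖

/-- `S_n(t) = B_n(t) - B_n(0)`. -/
def Sber (n : ℕ) (t : ℝ) : ℝ :=
  Polynomial.aeval t (Polynomial.bernoulli n) - Polynomial.aeval (0 : ℝ) (Polynomial.bernoulli n)

/-- The generalized Taylor polynomial on the triangle `V1 V2 V3` with respect to `V1`. -/
def Pgen (V1 V2 V3 : E2) (m : ℕ) (f : E2 → ℝ) (x : E2) : ℝ :=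
  f V1
  + ∑ j ∈ Finset.Icc 1 m,
      (DD (V2 - V1) (V3 - V1) 0 (j - 1) f V3 - DD (V2 - V1) (V3 - V1) 0 (j - 1) f V1)
        * Sber j (lam2 V1 V2 V3 x + lam3 V1 V2 V3 x) / (Nat.factorial j)
  + ∑ i ∈ Finset.Icc 1 m, ∑ j ∈ Finset.Icc 1 (m - i + 1),
      ((-1 : ℝ) ^ (i + j) *
          (DD (V1 - V2) (V3 - V2) (j - 1) (i - 1) f V2
            - DD (V1 - V2) (V3 - V2) (j - 1) (i - 1) f V1)
        + (-1 : ℝ) ^ j *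
          (DD (V1 - V3) (V2 - V3) (j - 1) (i - 1) f V3
            - DD (V1 - V3) (V2 - V3) (j - 1) (i - 1) f V1))
      * ((lam2 V1 V2 V3 x + lam3 V1 V2 V3 x) ^ (i - 1)
          * Sber i (lam2 V1 V2 V3 x / (lam2 V1 V2 V3 x + lam3 V1 V2 V3 x))
          / (Nat.factorial i))
      * (Sber j (lam2 V1 V2 V3 x + lam3 V1 V2 V3 x) / (Nat.factorial j))

/-- The Taylor polynomial of order `m` of `f` at `V`. -/
def Tpoly (m : ℕ) (f : E2 → ℝ) (V x : E2) : ℝ :=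
  ∑ a ∈ Finset.range (m + 1), ∑ b ∈ Finset.range (m + 1 - a),
    pd a b f V / (Nat.factorial a * Nat.factorial b) * (x 0 - V 0) ^ a * (x 1 - V 1) ^ b

/-- The Franke–Little/Renka local weight
`W_{μ,j}(x) = (max(1/‖x - V_j‖ - 1/R_{w_j}, 0))^μ`. -/
def Wloc (N : ℕ) (V : Fin N → E2) (R : Fin N → ℝ) (μ : ℝ) (j : Fin N) (x : E2) : ℝ :=
  (max (1 / ‖x - V j‖ - 1 / R j) 0) ^ μ

/-- The bivariate Shepard–Bernoulli operator
`S_{B_m}[f](x) = ∑ i W̃_{μ,i}(x) P_m^{Δ₂(i)}[f](x)`, where `Δ₂(i)` is the triangle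
with vertices `V i, B i, C i`. -/
def SB (N : ℕ) (V B C : Fin N → E2) (R : Fin N → ℝ) (μ : ℝ) (m : ℕ)
    (f : E2 → ℝ) (x : E2) : ℝ :=
  ∑ i, (Wloc N V R μ i x / ∑ j, Wloc N V R μ j x) * Pgen (V i) (B i) (C i) m f x

/-!
Because the normalized weights sum to one, `SB - f (V k) = ∑ i W̃ i * (P i - f (V k))`. As
`x → V k` the weight `W k` blows up, so every node `V i ≠ V k` keeps a bounded weight and gets
normalized weight tending to `0`, while its polynomial stays locally bounded; every node with
`V i = V k` has normalized weight in `[0, 1]` and `P i → f (V i) = f (V k)`.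

The generalized Taylor polynomial is not continuous as written, because its Bernoulli terms divide
by `S = λ₂ + λ₃`. But `P i - f (V i)` is dominated by a continuous function vanishing at `V i`
(built from homogenized polynomials), which gives both the limit at `V i` and local boundedness.
-/

section Domination

variable {X Y : Type*} [TopologicalSpace X] [TopologicalSpace Y]

def DominatedAt (u : X → ℝ) (a : X) : Prop :=
  ∃ g : X → ℝ, Continuous g ∧ g a = 0 ∧ ∀ x, ‖u x‖ ≤ g x

namespace DominatedAt

variable {u v : X → ℝ} {a : X}

lemma of_continuous (hu : Continuous u) (ha : u a = 0) : DominatedAt u a :=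
  ⟨fun x => ‖u x‖, hu.norm, by simp [ha], fun _ => le_rfl⟩

lemma add (hu : DominatedAt u a) (hv : DominatedAt v a) : DominatedAt (fun x => u x + v x) a := by
  obtain ⟨g, hg, hga, hug⟩ := hu
  obtain ⟨h, hh, hha, hvh⟩ := hv
  exact ⟨g + h, hg.add hh, by simp [hga, hha],
    fun x => (norm_add_le _ _).trans (add_le_add (hug x) (hvh x))⟩

lemma sum {ι : Type*} (s : Finset ι) {u : ι → X → ℝ}
    (hu : ∀ i ∈ s, DominatedAt (u i) a) :
    DominatedAt (fun x => ∑ i ∈ s, u i x) a := by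
  classical
  induction s using Finset.induction_on with
  | empty => exact of_continuous continuous_const (by simp)
  | insert i s hi ih =>
    simp only [Finset.sum_insert hi]
    exact (hu i (Finset.mem_insert_self i s)).add
      (ih fun j hj => hu j (Finset.mem_insert_of_mem hj))

lemma const_mul (hu : DominatedAt u a) (c : ℝ) : DominatedAt (fun x => c * u x) a := by
  obtain ⟨g, hg, hga, hug⟩ := hu
  exact ⟨fun x => ‖c‖ * g x, continuous_const.mul hg, by simp [hga],
    fun x => (norm_mul c (u x)).trans_le (mul_le_mul_of_nonneg_left (hug x) (norm_nonneg c))⟩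

lemma comp {u : Y → ℝ} {b : Y} (hu : DominatedAt u b) {φ : X → Y} (hφ : Continuous φ)
    (ha : φ a = b) : DominatedAt (u ∘ φ) a := by
  obtain ⟨g, hg, hgb, hug⟩ := hu
  exact ⟨g ∘ φ, hg.comp hφ, by simp [ha, hgb], fun x => hug (φ x)⟩

lemma tendsto (hu : DominatedAt u a) : Tendsto u (𝓝 a) (𝓝 0) := by
  obtain ⟨g, hg, hga, hug⟩ := hu
  exact squeeze_zero_norm hug (hga ▸ hg.tendsto a)

lemma isBoundedUnder_add_const (hu : DominatedAt u a) (c : ℝ) (b : X) :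
    IsBoundedUnder (· ≤ ·) (𝓝 b) (norm ∘ fun x => u x + c) := by
  obtain ⟨g, hg, -, hug⟩ := hu
  have hbound : Continuous fun x => g x + ‖c‖ := hg.add continuous_const
  refine (hbound.tendsto b).isBoundedUnder_le.mono_le (Eventually.of_forall fun x => ?_)
  exact (norm_add_le _ _).trans (add_le_add_left (hug x) _)

end DominatedAt

end Domination

theorem tendsto_sum_div_sum_mul {X ι : Type*} [Fintype ι] {l : Filter X} {w P : ι → X → ℝ}
    {c : ℝ} (hw : ∀ i x, 0 ≤ w i x) {k : ι} (hk : Tendsto (w k) l atTop)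
    (hP : ∀ i, Tendsto (P i) l (𝓝 c) ∨
      IsBoundedUnder (· ≤ ·) l (norm ∘ w i) ∧
        IsBoundedUnder (· ≤ ·) l (norm ∘ fun x => P i x - c)) :
    Tendsto (fun x => ∑ i, (w i x / ∑ j, w j x) * P i x) l (𝓝 c) := by
  have hle : ∀ i x, w i x ≤ ∑ j, w j x := fun i x =>
    Finset.single_le_sum (fun j _ => hw j x) (Finset.mem_univ i)
  have hsum_nonneg : ∀ x, 0 ≤ ∑ j, w j x := fun x => (hw k x).trans (hle k x)
  have hsum : Tendsto (fun x => ∑ j, w j x) l atTop := tendsto_atTop_mono (hle k) hk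
  have hterm : ∀ i, Tendsto (fun x => (w i x / ∑ j, w j x) * (P i x - c)) l (𝓝 0) := by
    intro i
    rcases hP i with hPi | ⟨hwi, hPi⟩
    · refine isBoundedUnder_le_mul_tendsto_zero (isBoundedUnder_of ⟨1, fun x => ?_⟩)
        (tendsto_sub_nhds_zero_iff.mpr hPi)
      rw [Function.comp_apply, Real.norm_of_nonneg (div_nonneg (hw i x) (hsum_nonneg x))]
      exact div_le_one_of_le₀ (hle i x) (hsum_nonneg x)
    · have hwi0 : Tendsto (fun x => w i x * (∑ j, w j x)⁻¹) l (𝓝 0) :=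
        isBoundedUnder_le_mul_tendsto_zero hwi (tendsto_inv_atTop_zero.comp hsum)
      simpa only [div_eq_mul_inv] using hwi0.zero_mul_isBoundedUnder_le hPi
  have hsum0 : Tendsto (fun x => ∑ i, (w i x / ∑ j, w j x) * (P i x - c)) l (𝓝 0) := by
    simpa using tendsto_finsetSum _ fun i _ => hterm i
  refine tendsto_sub_nhds_zero_iff.mp (hsum0.congr' ?_)
  filter_upwards [hsum.eventually_gt_atTop 0] with x hx
  simp only [mul_sub, Finset.sum_sub_distrib, ← Finset.sum_mul, ← Finset.sum_div,
    div_self hx.ne', one_mul]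

section Bernoulli

open Polynomial

def sberPoly (n : ℕ) : ℝ[X] :=
  (Polynomial.bernoulli n - C ((Polynomial.bernoulli n).eval 0)).map (algebraMap ℚ ℝ)

lemma eval_sberPoly (n : ℕ) (t : ℝ) : (sberPoly n).eval t = Sber n t := by
  simp [sberPoly, Sber, aeval_def, eval_map, eval₂_at_zero, coeff_zero_eq_eval_zero]

lemma Sber_zero_right (n : ℕ) : Sber n 0 = 0 := by simp [Sber]

@[fun_prop]
lemma continuous_Sber (n : ℕ) : Continuous (Sber n) := by
  simpa only [eval_sberPoly] using (sberPoly n).continuous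

lemma natDegree_bernoulli_le (n : ℕ) : (Polynomial.bernoulli n).natDegree ≤ n :=
  natDegree_sum_le_of_forall_le _ _ fun i _ => (natDegree_monomial_le _).trans (n.sub_le i)

lemma natDegree_sberPoly_le (n : ℕ) : (sberPoly n).natDegree ≤ n :=
  natDegree_map_le.trans <| (natDegree_sub_le _ _).trans <| by
    simpa using natDegree_bernoulli_le n

lemma X_dvd_sberPoly (n : ℕ) : X ∣ sberPoly n := by
  rw [X_dvd_iff, coeff_zero_eq_eval_zero, eval_sberPoly, Sber_zero_right]

/- Off the line `S = 0` the term is `G i (L, S) * q j S`, where `G i` is the degree-`i`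
homogenization of `Sber i` and `Sber j = X * q j`; on that line the junk value `L / 0 = 0` is
harmless because `Sber j 0 = 0`. -/
lemma dominatedAt_mixedBernoulli {i : ℕ} (hi : 1 ≤ i) (j : ℕ) :
    DominatedAt (fun p : ℝ × ℝ => p.2 ^ (i - 1) * Sber i (p.1 / p.2) * Sber j p.2) 0 := by
  obtain ⟨q, hq⟩ := X_dvd_sberPoly j
  have hG : Continuous fun p : ℝ × ℝ =>
      MvPolynomial.eval ![p.1, p.2] ((sberPoly i).homogenize i) :=
    (MvPolynomial.continuous_eval _).comp (by fun_prop)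
  refine ⟨fun p => ‖MvPolynomial.eval ![p.1, p.2] ((sberPoly i).homogenize i) * q.eval p.2‖,
    (hG.mul ((q.continuous).comp continuous_snd)).norm, ?_, fun p => ?_⟩
  · have hG0 : MvPolynomial.constantCoeff ((sberPoly i).homogenize i) = 0 := by
      rw [MvPolynomial.constantCoeff_eq, coeff_homogenize]
      simp [← X_dvd_iff, X_dvd_sberPoly]
    simp [← Matrix.zero_empty, hG0]
  · rcases eq_or_ne p.2 0 with h0 | h0
    · simp only [h0, Sber_zero_right, mul_zero, norm_zero]
      exact norm_nonneg _
    · have hGp := eval_homogenize (natDegree_sberPoly_le i) ![p.1, p.2] h0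
      have hSj : Sber j p.2 = p.2 * q.eval p.2 := by rw [← eval_sberPoly, hq, eval_mul, eval_X]
      simp only [Matrix.cons_val_zero, Matrix.cons_val_one, eval_sberPoly] at hGp
      dsimp only
      rw [hGp, hSj, ← Nat.sub_add_cancel hi, pow_succ, Nat.add_sub_cancel]
      exact (congrArg norm (by ring)).le

end Bernoulli

section GeneralizedTaylor

variable (V1 V2 V3 : E2)

lemma continuous_lam2 : Continuous (lam2 V1 V2 V3) := by
  unfold lam2 detA; fun_prop

lemma continuous_lam3 : Continuous (lam3 V1 V2 V3) := by
  unfold lam3 detA; fun_prop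

lemma lam2_self : lam2 V1 V2 V3 V1 = 0 := by simp [lam2, detA]

lemma lam3_self : lam3 V1 V2 V3 V1 = 0 := by simp [lam3, detA]

variable (m : ℕ) (f : E2 → ℝ)

lemma dominatedAt_Pgen_sub : DominatedAt (fun x => Pgen V1 V2 V3 m f x - f V1) V1 := by
  set L := lam2 V1 V2 V3
  set S := fun x => lam2 V1 V2 V3 x + lam3 V1 V2 V3 x
  have hS : Continuous S := (continuous_lam2 V1 V2 V3).add (continuous_lam3 V1 V2 V3)
  have hS0 : S V1 = 0 := by simp [S, lam2_self, lam3_self]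
  have hLS : Continuous fun x => (L x, S x) := (continuous_lam2 V1 V2 V3).prodMk hS
  have hLS0 : (L V1, S V1) = 0 := by simp [L, hS0, lam2_self]
  have hsplit : (fun x => Pgen V1 V2 V3 m f x - f V1) = fun x =>
      (∑ j ∈ Finset.Icc 1 m,
        (DD (V2 - V1) (V3 - V1) 0 (j - 1) f V3 - DD (V2 - V1) (V3 - V1) 0 (j - 1) f V1)
          * Sber j (S x) / (Nat.factorial j))
      + ∑ i ∈ Finset.Icc 1 m, ∑ j ∈ Finset.Icc 1 (m - i + 1),
        ((-1 : ℝ) ^ (i + j) *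
            (DD (V1 - V2) (V3 - V2) (j - 1) (i - 1) f V2
              - DD (V1 - V2) (V3 - V2) (j - 1) (i - 1) f V1)
          + (-1 : ℝ) ^ j *
            (DD (V1 - V3) (V2 - V3) (j - 1) (i - 1) f V3
              - DD (V1 - V3) (V2 - V3) (j - 1) (i - 1) f V1))
        / (Nat.factorial i * Nat.factorial j)
        * (S x ^ (i - 1) * Sber i (L x / S x) * Sber j (S x)) := by
    funext x
    rw [Pgen, add_assoc, add_sub_cancel_left]
    congr 1
    exact Finset.sum_congr rfl fun i _ => Finset.sum_congr rfl fun j _ => by ring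
  rw [hsplit]
  refine .add (.sum _ fun j _ => .of_continuous (by fun_prop) ?_)
    (.sum _ fun i hi => .sum _ fun j _ => ?_)
  · simp [hS0, Sber_zero_right]
  · exact ((dominatedAt_mixedBernoulli (Finset.mem_Icc.mp hi).1 j).comp hLS hLS0).const_mul _

lemma tendsto_Pgen : Tendsto (Pgen V1 V2 V3 m f) (𝓝 V1) (𝓝 (f V1)) :=
  tendsto_sub_nhds_zero_iff.mp (dominatedAt_Pgen_sub V1 V2 V3 m f).tendsto

lemma isBoundedUnder_Pgen_sub (c : ℝ) (b : E2) :
    IsBoundedUnder (· ≤ ·) (𝓝 b) (norm ∘ fun x => Pgen V1 V2 V3 m f x - c) := by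
  simpa using (dominatedAt_Pgen_sub V1 V2 V3 m f).isBoundedUnder_add_const (f V1 - c) b

end GeneralizedTaylor

section Weights

variable {N : ℕ} {V : Fin N → E2} {R : Fin N → ℝ} {μ : ℝ}

lemma Wloc_nonneg (j : Fin N) (x : E2) : 0 ≤ Wloc N V R μ j x :=
  Real.rpow_nonneg (le_max_right _ _) _

lemma continuousAt_Wloc (hμ : 0 ≤ μ) {j : Fin N} {x : E2} (hx : x ≠ V j) :
    ContinuousAt (Wloc N V R μ j) x := by
  have hx' : ‖x - V j‖ ≠ 0 := norm_ne_zero_iff.mpr (sub_ne_zero.mpr hx)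
  have hinv : ContinuousAt (fun y => 1 / ‖y - V j‖) x :=
    continuousAt_const.div (continuousAt_id.sub continuousAt_const).norm hx'
  exact (Real.continuous_rpow_const hμ).continuousAt.comp
    ((hinv.sub continuousAt_const).max continuousAt_const)

lemma tendsto_Wloc_atTop (hμ : 0 < μ) (k : Fin N) :
    Tendsto (Wloc N V R μ k) (𝓝[≠] V k) atTop := by
  have hinv : Tendsto (fun x => 1 / ‖x - V k‖) (𝓝[≠] V k) atTop := by
    simpa only [one_div, Pi.inv_def] using
      (tendsto_norm_sub_self_nhdsNE (V k)).inv_tendsto_nhdsGT_zero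
  exact (tendsto_rpow_atTop hμ).comp <|
    tendsto_atTop_mono (fun x => le_max_left _ 0) (tendsto_atTop_add_const_right _ _ hinv)

end Weights

theorem SB_interpolates_general (N : ℕ)
    (V : Fin N → E2)
    (μ : ℝ) (hμ : 0 < μ) (R : Fin N → ℝ)
    (B C : Fin N → E2)
    (m : ℕ)
    (f : E2 → ℝ)
    (k : Fin N) :
    Filter.Tendsto (SB N V B C R μ m f)
      (nhdsWithin (V k) {x | ∀ i, x ≠ V i}) (nhds (f (V k))) := by
  have hnodes : 𝓝[{x | ∀ i, x ≠ V i}] V k ≤ 𝓝[≠] V k :=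
    nhdsWithin_mono _ fun x hx => hx k
  refine tendsto_sum_div_sum_mul (w := Wloc N V R μ) (P := fun i => Pgen (V i) (B i) (C i) m f)
    Wloc_nonneg ((tendsto_Wloc_atTop hμ k).mono_left hnodes) fun i => ?_
  by_cases hik : V i = V k
  · left
    rw [← hik]
    exact (tendsto_Pgen _ _ _ m f).mono_left nhdsWithin_le_nhds
  · right
    refine ⟨?_, (isBoundedUnder_Pgen_sub _ _ _ m f _ _).mono nhdsWithin_le_nhds⟩
    exact ((continuousAt_Wloc hμ.le (Ne.symm hik)).norm.isBoundedUnder_le).mono nhdsWithin_le_nhds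

/-- **The Shepard–Bernoulli operator interpolates at every node:**
`S_{B_m}[f](x) → f(V_k)` as `x → V_k` through non-node points. -/
theorem SB_interpolates (N : ℕ) (D : Set E2) (hDc : IsCompact D) (hDconv : Convex ℝ D)
    (V : Fin N → E2) (hV : Function.Injective V) (hVD : ∀ i, V i ∈ D)
    (μ : ℝ) (hμ : 0 < μ) (R : Fin N → ℝ) (hR : ∀ j, 0 < R j)
    (B C : Fin N → E2) (hnc : ∀ i, detA (V i) (B i) (C i) ≠ 0)
    (hTD : ∀ i, convexHull ℝ {V i, B i, C i} ⊆ D)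
    (m : ℕ) (hm : 1 ≤ m)
    (U : Set E2) (hU : IsOpen U) (hDU : D ⊆ U)
    (f : E2 → ℝ) (hf : ContDiffOn ℝ m f U)
    (hden : ∀ k : Fin N, ∀ᶠ x in nhdsWithin (V k) {x | ∀ i, x ≠ V i},
      0 < ∑ j, Wloc N V R μ j x)
    (k : Fin N) :
    Filter.Tendsto (SB N V B C R μ m f)
      (nhdsWithin (V k) {x | ∀ i, x ≠ V i}) (nhds (f (V k))) :=
  SB_interpolates_general N V μ hμ R B C m f k
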